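/- Let X be a topological vector space over ℂ, T a continuous linear operator on X, and r ≥ 1 an integer. Then T is a PS*-operator if and only if the direct sum operator T ⊕ T² ⊕ … ⊕ T^r on X^r, defined by (x₁, …, x_r) ↦ (T x₁, T² x₂, …, T^r x_r), is a PS*-operator on X^r (with the product topology). -/

import Mathlib

open Filter Set

/-- `A ⊆ ℕ` is syndetic: some `M` such that every interval of `M` consecutive
natural numbers meets `A`. -/
def Syndetic (A : Set ℕ) : Prop :=
  ∃ M : ℕ, ∀ n : ℕ, ∃ k, n ≤ k ∧ k < n + M ∧ k ∈ A

/-- `A ⊆ ℕ` is thick: it contains arbitrarily long intervals of consecutive numbers. -/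
def Thick (A : Set ℕ) : Prop :=
  ∀ L : ℕ, ∃ n : ℕ, ∀ i ≤ L, n + i ∈ A

/-- `A ⊆ ℕ` is piecewise syndetic: the intersection of a thick set and a syndetic set. -/
def PiecewiseSyndetic (A : Set ℕ) : Prop :=
  ∃ B C : Set ℕ, Thick B ∧ Syndetic C ∧ A = B ∩ C

/-- `A ⊆ ℕ` is a PS* set: it meets every piecewise syndetic set. -/
def PSStarSet (A : Set ℕ) : Prop :=
  ∀ B : Set ℕ, PiecewiseSyndetic B → (A ∩ B).Nonempty

/-- `S` is a PS*-operator: every return set `N(U,V)` between nonempty open sets is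
a PS* set. -/
def PSStarOperator {Y : Type*} [AddCommGroup Y] [Module ℂ Y] [TopologicalSpace Y]
    [IsTopologicalAddGroup Y] [ContinuousSMul ℂ Y] (S : Y →L[ℂ] Y) : Prop :=
  ∀ U V : Set Y, IsOpen U → IsOpen V → U.Nonempty → V.Nonempty →
    PSStarSet {n : ℕ | ((S ^ n) '' U ∩ V).Nonempty}

/-- The direct sum operator `T ⊕ T² ⊕ ⋯ ⊕ T^r` on `X^r`,
`(x₁, …, x_r) ↦ (T x₁, T² x₂, …, T^r x_r)`. -/
noncomputable def directSumPowers {X : Type*} [AddCommGroup X] [Module ℂ X]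
    [TopologicalSpace X] [IsTopologicalAddGroup X] [ContinuousSMul ℂ X]
    (T : X →L[ℂ] X) (r : ℕ) : (Fin r → X) →L[ℂ] (Fin r → X) :=
  ContinuousLinearMap.pi (fun i => (T ^ ((i : ℕ) + 1)).comp (ContinuousLinearMap.proj i))

lemma psstar_mono {A A' : Set ℕ} (h : A ⊆ A') (hA : PSStarSet A) : PSStarSet A' := by
  intro B hB
  obtain ⟨x, hx1, hx2⟩ := hA B hB
  exact ⟨x, h hx1, hx2⟩

lemma thick_inter_syndetic_nonempty {B C : Set ℕ} (hB : Thick B) (hC : Syndetic C) :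
    (B ∩ C).Nonempty := by
  obtain ⟨M, hM⟩ := hC
  obtain ⟨n, hn⟩ := hB M
  obtain ⟨k, hk1, hk2, hk3⟩ := hM n
  have : k = n + (k - n) := by omega
  exact ⟨k, by rw [this]; exact hn _ (by omega), hk3⟩

lemma psstar_iff (A : Set ℕ) : PSStarSet A ↔ ∀ S, Syndetic S → Syndetic (A ∩ S) := by
  constructor
  · intro hA S hS
    by_contra h
    have hthick : Thick (A ∩ S)ᶜ := by
      intro L
      simp only [Syndetic, not_exists, not_forall] at h
      obtain ⟨n, hn⟩ := h (L + 1)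
      refine ⟨n, fun i hi => ?_⟩
      intro hmem
      exact (hn (n + i)) ⟨by omega, by omega, hmem⟩
    have hPS : PiecewiseSyndetic ((A ∩ S)ᶜ ∩ S) := ⟨(A ∩ S)ᶜ, S, hthick, hS, rfl⟩
    obtain ⟨x, hx1, hx2, hx3⟩ := hA _ hPS
    exact hx2 ⟨hx1, hx3⟩
  · intro h B hB
    obtain ⟨Bt, C, hBt, hC, rfl⟩ := hB
    obtain ⟨M, hM⟩ := h C hC
    obtain ⟨n, hn⟩ := hBt M
    obtain ⟨k, hk1, hk2, hk3, hk4⟩ := hM n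
    have hkB : k ∈ Bt := by
      have : k = n + (k - n) := by omega
      rw [this]; exact hn _ (by omega)
    exact ⟨k, hk3, hkB, hk4⟩

lemma psstar_univ : PSStarSet (univ : Set ℕ) := by
  rw [psstar_iff]
  intro S hS
  simpa using hS

lemma psstar_inter {A B : Set ℕ} (hA : PSStarSet A) (hB : PSStarSet B) :
    PSStarSet (A ∩ B) := by
  rw [psstar_iff] at hA hB ⊢
  intro S hS
  have := hA _ (hB S hS)
  rwa [show A ∩ (B ∩ S) = A ∩ B ∩ S by rw [inter_assoc]] at this

lemma psstar_iInter {ι : Type*} [Fintype ι] (A : ι → Set ℕ) (h : ∀ i, PSStarSet (A i)) :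
    PSStarSet (⋂ i, A i) := by
  classical
  have key : ∀ s : Finset ι, PSStarSet (⋂ i ∈ s, A i) := by
    intro s
    induction s using Finset.induction with
    | empty => simpa using psstar_univ
    | insert a s ha ih =>
      rw [Finset.set_biInter_insert]
      exact psstar_inter (h _) ih
  have := key Finset.univ
  simpa using this

lemma ps_smul {D : Set ℕ} {k : ℕ} (hk : 0 < k) (hD : PiecewiseSyndetic D) :
    PiecewiseSyndetic ((fun m => k * m) '' D) := by
  obtain ⟨B, C, hB, hC, rfl⟩ := hD
  refine ⟨(fun m => k * m) '' B ∪ {m | ¬ (k ∣ m)}, (fun m => k * m) '' C, ?_, ?_, ?_⟩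
  · -- thick
    intro L
    obtain ⟨n, hn⟩ := hB L
    refine ⟨k * n, fun i hi => ?_⟩
    by_cases hdvd : k ∣ (k * n + i)
    · left
      have hki : k ∣ i := (Nat.dvd_add_right ⟨n, rfl⟩).mp hdvd
      obtain ⟨j, rfl⟩ := hki
      have hj : j ≤ L := le_trans (Nat.le_mul_of_pos_left j hk) hi
      exact ⟨n + j, hn j hj, by ring⟩
    · right; exact hdvd
  · -- syndetic
    obtain ⟨M, hM⟩ := hC
    refine ⟨k * M + k, fun n => ?_⟩
    obtain ⟨j, hj1, hj2, hj3⟩ := hM (n / k + 1)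
    refine ⟨k * j, ?_, ?_, ⟨j, hj3, rfl⟩⟩
    · have h1 : n < (n / k + 1) * k := (Nat.div_lt_iff_lt_mul hk).mp (by omega)
      calc n ≤ k * (n / k + 1) := by rw [mul_comm]; omega
        _ ≤ k * j := Nat.mul_le_mul_left k hj1
    · have h2 : n / k * k ≤ n := Nat.div_mul_le_self n k
      have : k * j < k * (n / k + 1 + M) := (Nat.mul_lt_mul_left hk).mpr hj2
      have h3 : k * (n / k + 1 + M) = k * (n / k) + k + k * M := by ring
      rw [mul_comm] at h2
      omega
  · -- equality
    ext x
    constructor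
    · rintro ⟨d, ⟨hdB, hdC⟩, rfl⟩
      exact ⟨Or.inl ⟨d, hdB, rfl⟩, ⟨d, hdC, rfl⟩⟩
    · rintro ⟨hB', c, hcC, rfl⟩
      rcases hB' with ⟨b, hbB, hb⟩ | hnd
      · have : b = c := Nat.eq_of_mul_eq_mul_left hk hb
        subst this
        exact ⟨b, ⟨hbB, hcC⟩, rfl⟩
      · exact absurd ⟨c, rfl⟩ hnd

lemma psstar_div {A : Set ℕ} {k : ℕ} (hk : 0 < k) (hA : PSStarSet A) :
    PSStarSet {n : ℕ | k * n ∈ A} := by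
  intro D hD
  obtain ⟨x, hxA, n, hnD, rfl⟩ := hA _ (ps_smul hk hD)
  exact ⟨n, hxA, hnD⟩

lemma directSumPowers_pow_apply {X : Type*} [AddCommGroup X] [Module ℂ X]
    [TopologicalSpace X] [IsTopologicalAddGroup X] [ContinuousSMul ℂ X]
    (T : X →L[ℂ] X) (r : ℕ) (n : ℕ) (f : Fin r → X) (i : Fin r) :
    ((directSumPowers T r) ^ n) f i = (T ^ (((i : ℕ) + 1) * n)) (f i) := by
  induction n generalizing f with
  | zero => simp
  | succ n ih =>
    have hstep : (directSumPowers T r) f i = (T ^ ((i : ℕ) + 1)) (f i) := rfl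
    have : ((directSumPowers T r) ^ (n + 1)) f = ((directSumPowers T r) ^ n)
        ((directSumPowers T r) f) := by
      rw [pow_succ]; rfl
    rw [this, ih, hstep, ← ContinuousLinearMap.mul_apply, ← pow_add,
      show ((i : ℕ) + 1) * n + ((i : ℕ) + 1) = ((i : ℕ) + 1) * (n + 1) by ring]

/-- `T` is a PS*-operator iff `T ⊕ T² ⊕ ⋯ ⊕ T^r` is a PS*-operator on `X^r`. -/
theorem PSStarOperator_iff_directSum
    {X : Type*} [AddCommGroup X] [Module ℂ X] [TopologicalSpace X]
    [IsTopologicalAddGroup X] [ContinuousSMul ℂ X]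
    (T : X →L[ℂ] X) (r : ℕ) (hr : 1 ≤ r) :
    PSStarOperator T ↔ PSStarOperator (directSumPowers T r) := by
  constructor
  · intro hT W W' hWo hW'o hWne hW'ne
    obtain ⟨u, hu⟩ := hWne
    obtain ⟨v, hv⟩ := hW'ne
    obtain ⟨I, U, hU, hIU⟩ := isOpen_pi_iff.mp hWo u hu
    obtain ⟨J, V, hV, hJV⟩ := isOpen_pi_iff.mp hW'o v hv
    classical
    set U' : Fin r → Set X := fun i => if i ∈ I then U i else univ with hU'def
    set V' : Fin r → Set X := fun i => if i ∈ J then V i else univ with hV'def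
    have hU'open : ∀ i, IsOpen (U' i) := by
      intro i; by_cases h : i ∈ I
      · simpa [hU'def, h] using (hU i h).1
      · simp [hU'def, h]
    have hV'open : ∀ i, IsOpen (V' i) := by
      intro i; by_cases h : i ∈ J
      · simpa [hV'def, h] using (hV i h).1
      · simp [hV'def, h]
    have huU' : ∀ i, u i ∈ U' i := by
      intro i; by_cases h : i ∈ I
      · simpa [hU'def, h] using (hU i h).2
      · simp [hU'def, h]
    have hvV' : ∀ i, v i ∈ V' i := by
      intro i; by_cases h : i ∈ J
      · simpa [hV'def, h] using (hV i h).2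
      · simp [hV'def, h]
    have hU'sub : univ.pi U' ⊆ W := by
      intro f hf
      apply hIU
      intro i hi
      have hi' : i ∈ I := hi
      have := hf i (mem_univ i)
      simpa [hU'def, hi'] using this
    have hV'sub : univ.pi V' ⊆ W' := by
      intro f hf
      apply hJV
      intro i hi
      have hi' : i ∈ J := hi
      have := hf i (mem_univ i)
      simpa [hV'def, hi'] using this
    have hstar : PSStarSet (⋂ i : Fin r,
        {n : ℕ | ((i : ℕ) + 1) * n ∈ {m : ℕ | ((T ^ m) '' (U' i) ∩ (V' i)).Nonempty}}) := by
      apply psstar_iInter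
      intro i
      exact psstar_div (Nat.succ_pos _)
        (hT (U' i) (V' i) (hU'open i) (hV'open i) ⟨u i, huU' i⟩ ⟨v i, hvV' i⟩)
    apply psstar_mono _ hstar
    intro n hn
    simp only [mem_iInter, mem_setOf_eq] at hn
    have hn' : ∀ i : Fin r, ∃ z, z ∈ U' i ∧ (T ^ (((i : ℕ) + 1) * n)) z ∈ V' i := by
      intro i
      obtain ⟨y, ⟨z, hz, rfl⟩, hy⟩ := hn i
      exact ⟨z, hz, hy⟩
    choose x hx1 hx2 using hn'
    refine ⟨(directSumPowers T r ^ n) x, ⟨x, hU'sub fun i _ => hx1 i, rfl⟩, ?_⟩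
    apply hV'sub
    intro i _
    rw [directSumPowers_pow_apply]
    exact hx2 i
  · intro hS U V hUo hVo hUne hVne
    obtain ⟨u, hu⟩ := hUne
    set i0 : Fin r := ⟨0, hr⟩ with hi0
    have hS' := hS ((fun f : Fin r → X => f i0) ⁻¹' U) ((fun f : Fin r → X => f i0) ⁻¹' V)
      ((continuous_apply (A := fun _ : Fin r => X) i0).isOpen_preimage U hUo)
      ((continuous_apply (A := fun _ : Fin r => X) i0).isOpen_preimage V hVo)
      ⟨fun _ => u, hu⟩ ⟨fun _ => (hVne.some), hVne.some_mem⟩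
    apply psstar_mono _ hS'
    intro n hn
    obtain ⟨y, ⟨f, hf, rfl⟩, hy⟩ := hn
    refine ⟨(T ^ n) (f i0), ⟨f i0, hf, rfl⟩, ?_⟩
    have := directSumPowers_pow_apply T r n f i0
    simp only [hi0] at this
    simp only [mem_preimage] at hy
    rwa [this, show ((0 : ℕ) + 1) * n = n by ring] at hy
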